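/- Let $X$ be a rack and $B$ the differential graded algebra as above. The algebra map $\Delta : B \to B \otimes B$ (graded tensor product with Koszul signs) determined by $\Delta(x) = x \otimes x$ and $\Delta(e_x) = e_x \otimes x + 1 \otimes e_x$ is well defined, i.e., the ideal $\langle yx^y - xy,\ y e_{x^y} - e_x y \rangle$ is contained in the kernel of the composite $k\langle x, e_y \rangle \to B \otimes B$. -/

import Mathlib

open scoped TensorProduct

/-- A rack: a set with a binary operation `act x y = x ◁ y` such that right
translations are bijective and right self-distributivity holds. -/
structure RackS (X : Type*) where
  act : X → X → X
  bij : ∀ y : X, Function.Bijective fun x => act x y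
  distrib : ∀ x y z : X, act (act x y) z = act (act x z) (act y z)

/-- The relations `y * x^y = x * y` and `y * e_{x^y} = e_x * y` defining the
dg bialgebra `B(X)`; the left copy of `X` (via `Sum.inl`) gives the degree-zero
generators `x`, the right copy (via `Sum.inr`) the degree-one generators `e_x`. -/
inductive Brel (k : Type*) [CommRing k] {X : Type*} (R : RackS X) :
    FreeAlgebra k (X ⊕ X) → FreeAlgebra k (X ⊕ X) → Prop
  | comm (x y : X) : Brel k R
      (FreeAlgebra.ι k (Sum.inl y) * FreeAlgebra.ι k (Sum.inl (R.act x y)))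
      (FreeAlgebra.ι k (Sum.inl x) * FreeAlgebra.ι k (Sum.inl y))
  | eact (x y : X) : Brel k R
      (FreeAlgebra.ι k (Sum.inl y) * FreeAlgebra.ι k (Sum.inr (R.act x y)))
      (FreeAlgebra.ι k (Sum.inr x) * FreeAlgebra.ι k (Sum.inl y))

/-- The algebra `B = k⟨x, e_y : x,y ∈ X⟩ / ⟨y x^y - x y, y e_{x^y} - e_x y⟩`. -/
abbrev BAlg (k : Type*) [CommRing k] {X : Type*} (R : RackS X) := RingQuot (Brel k R)

variable (k : Type*) [CommRing k] {X : Type*} (R : RackS X)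

/-- The degree-zero generator `x` of `B`. -/
noncomputable def gg (x : X) : BAlg k R :=
  RingQuot.mkAlgHom k (Brel k R) (FreeAlgebra.ι k (Sum.inl x))

/-- The degree-one generator `e_x` of `B`. -/
noncomputable def ee (x : X) : BAlg k R :=
  RingQuot.mkAlgHom k (Brel k R) (FreeAlgebra.ι k (Sum.inr x))

/-- The degree-`n` homogeneous component of `B`: the span of images of monomials in the
generators containing exactly `n` of the degree-one generators `e_x`. -/
def Bdeg (n : ℕ) : Submodule k (BAlg k R) :=
  Submodule.span k {z | ∃ l : List (X ⊕ X), l.countP (fun s => s.isRight) = n ∧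
    z = (l.map (Sum.elim (gg k R) (ee k R))).prod}

/-- `d` is the superderivation of degree `-1` of `B` with `d(x) = 0`, `d(e_x) = 1 - x`:
it satisfies the graded Leibniz rule `d(ab) = d(a)b + (-1)^{|a|} a d(b)` for `a`
homogeneous of degree `m`. -/
def IsBDeriv (d : BAlg k R →ₗ[k] BAlg k R) : Prop :=
  (∀ (m : ℕ) (a b : BAlg k R), a ∈ Bdeg k R m →
      d (a * b) = d a * b + ((-1 : k) ^ m) • (a * d b)) ∧
  (∀ x : X, d (gg k R x) = 0) ∧
  (∀ x : X, d (ee k R x) = 1 - gg k R x)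

/-- `μ` is the Koszul-signed multiplication on `B ⊗ B`:
`(a ⊗ b)(a' ⊗ b') = (-1)^{|b||a'|} (a a') ⊗ (b b')` for `b, a'` homogeneous. -/
def IsKoszulMul
    (μ : BAlg k R ⊗[k] BAlg k R →ₗ[k] BAlg k R ⊗[k] BAlg k R →ₗ[k] BAlg k R ⊗[k] BAlg k R) :
    Prop :=
  ∀ (m n : ℕ) (a b a' b' : BAlg k R), b ∈ Bdeg k R m → a' ∈ Bdeg k R n →
    μ (a ⊗ₜ b) (a' ⊗ₜ b') = ((-1 : k) ^ (m * n)) • ((a * a') ⊗ₜ[k] (b * b'))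

/-- `Δ : B → B ⊗ B` is the comultiplication: a unital multiplicative map (for the
Koszul-signed multiplication `μ` on `B ⊗ B`) with `Δ(x) = x ⊗ x` and
`Δ(e_x) = e_x ⊗ x + 1 ⊗ e_x`. -/
def IsBCoprod
    (μ : BAlg k R ⊗[k] BAlg k R →ₗ[k] BAlg k R ⊗[k] BAlg k R →ₗ[k] BAlg k R ⊗[k] BAlg k R)
    (Δ : BAlg k R →ₗ[k] BAlg k R ⊗[k] BAlg k R) : Prop :=
  Δ 1 = 1 ⊗ₜ 1 ∧
  (∀ a b : BAlg k R, Δ (a * b) = μ (Δ a) (Δ b)) ∧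
  (∀ x : X, Δ (gg k R x) = gg k R x ⊗ₜ gg k R x) ∧
  (∀ x : X, Δ (ee k R x) = ee k R x ⊗ₜ gg k R x + 1 ⊗ₜ ee k R x)

section Aux

variable (μ : BAlg k R ⊗[k] BAlg k R →ₗ[k] BAlg k R ⊗[k] BAlg k R →ₗ[k] BAlg k R ⊗[k] BAlg k R)

/-- The set of monomials in the generators of `B`. -/
def monoSet : Set (BAlg k R) :=
  {z | ∃ l : List (X ⊕ X), z = (l.map (Sum.elim (gg k R) (ee k R))).prod}

lemma one_mem_monoSet : (1 : BAlg k R) ∈ monoSet k R := ⟨[], rfl⟩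

lemma monoSet_mul {a b : BAlg k R} (ha : a ∈ monoSet k R) (hb : b ∈ monoSet k R) :
    a * b ∈ monoSet k R := by
  obtain ⟨l1, rfl⟩ := ha; obtain ⟨l2, rfl⟩ := hb
  exact ⟨l1 ++ l2, by rw [List.map_append, List.prod_append]⟩

lemma mono_mem_Bdeg {a : BAlg k R} (ha : a ∈ monoSet k R) : ∃ m, a ∈ Bdeg k R m := by
  obtain ⟨l, rfl⟩ := ha
  exact ⟨_, Submodule.subset_span ⟨l, rfl, rfl⟩⟩

lemma one_mem_Bdeg : (1 : BAlg k R) ∈ Bdeg k R 0 :=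
  Submodule.subset_span ⟨[], rfl, rfl⟩

lemma gg_mem_Bdeg (x : X) : gg k R x ∈ Bdeg k R 0 :=
  Submodule.subset_span ⟨[Sum.inl x], by simp, by simp⟩

lemma ee_mem_Bdeg (x : X) : ee k R x ∈ Bdeg k R 1 :=
  Submodule.subset_span ⟨[Sum.inr x], by simp, by simp⟩

lemma Bdeg_mul {m n : ℕ} {a b : BAlg k R} (ha : a ∈ Bdeg k R m) (hb : b ∈ Bdeg k R n) :
    a * b ∈ Bdeg k R (m + n) := by
  have h : a * b ∈ Bdeg k R m * Bdeg k R n := Submodule.mul_mem_mul ha hb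
  rw [Bdeg, Bdeg, Submodule.span_mul_span] at h
  refine Submodule.span_le.mpr ?_ h
  rintro z ⟨x, ⟨l1, hc1, rfl⟩, y, ⟨l2, hc2, rfl⟩, rfl⟩
  refine Submodule.subset_span ⟨l1 ++ l2, ?_, by rw [List.map_append, List.prod_append]⟩
  rw [List.countP_append, hc1, hc2]

lemma span_mono_top : Submodule.span k (monoSet k R) = ⊤ := by
  rw [Submodule.eq_top_iff']
  intro z
  obtain ⟨w, rfl⟩ := RingQuot.mkAlgHom_surjective k (Brel k R) z
  induction w with
  | grade0 r =>
      rw [AlgHom.commutes]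
      have : (algebraMap k (BAlg k R)) r = r • (1 : BAlg k R) := by
        rw [Algebra.smul_def, mul_one]
      rw [this]
      exact Submodule.smul_mem _ _ (Submodule.subset_span (one_mem_monoSet k R))
  | grade1 s =>
      refine Submodule.subset_span ⟨[s], ?_⟩
      cases s <;> simp [gg, ee]
  | mul a b ha hb =>
      rw [map_mul]
      refine Submodule.span_induction (p := fun x _ => x * (RingQuot.mkAlgHom k (Brel k R) b)
        ∈ Submodule.span k (monoSet k R)) ?_ ?_ ?_ ?_ ha
      · intro x hx
        refine Submodule.span_induction (p := fun y _ => x * y ∈ Submodule.span k (monoSet k R))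
          ?_ ?_ ?_ ?_ hb
        · intro y hy; exact Submodule.subset_span (monoSet_mul k R hx hy)
        · beta_reduce; rw [mul_zero]; exact Submodule.zero_mem _
        · intro y z _ _ py pz; beta_reduce; rw [mul_add]; exact Submodule.add_mem _ py pz
        · intro c y _ py; beta_reduce; rw [mul_smul_comm]; exact Submodule.smul_mem _ _ py
      · beta_reduce; rw [zero_mul]; exact Submodule.zero_mem _
      · intro x y _ _ px py; beta_reduce; rw [add_mul]; exact Submodule.add_mem _ px py
      · intro c x _ px; beta_reduce; rw [smul_mul_assoc]; exact Submodule.smul_mem _ _ px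
  | add a b ha hb => rw [map_add]; exact Submodule.add_mem _ ha hb

/-- Induction over `B ⊗ B` via pure tensors of monomials. -/
lemma tmono_induction {p : BAlg k R ⊗[k] BAlg k R → Prop}
    (mem : ∀ a ∈ monoSet k R, ∀ b ∈ monoSet k R, p (a ⊗ₜ b))
    (zero : p 0) (add : ∀ x y, p x → p y → p (x + y))
    (smul : ∀ (c : k) x, p x → p (c • x))
    (z : BAlg k R ⊗[k] BAlg k R) : p z := by
  have key : ∀ a b : BAlg k R, p (a ⊗ₜ b) := by
    intro a b
    have ha : a ∈ Submodule.span k (monoSet k R) := by rw [span_mono_top]; trivial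
    have hb : b ∈ Submodule.span k (monoSet k R) := by rw [span_mono_top]; trivial
    refine Submodule.span_induction (p := fun x _ => p (x ⊗ₜ b)) ?_ ?_ ?_ ?_ ha
    · intro x hx
      refine Submodule.span_induction (p := fun y _ => p (x ⊗ₜ y)) ?_ ?_ ?_ ?_ hb
      · intro y hy; exact mem x hx y hy
      · beta_reduce; rw [TensorProduct.tmul_zero]; exact zero
      · intro y z _ _ py pz; beta_reduce; rw [TensorProduct.tmul_add]; exact add _ _ py pz
      · intro c y _ py; beta_reduce; rw [TensorProduct.tmul_smul]; exact smul c _ py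
    · beta_reduce; rw [TensorProduct.zero_tmul]; exact zero
    · intro x y _ _ px py; beta_reduce; rw [TensorProduct.add_tmul]; exact add _ _ px py
    · intro c x _ px; beta_reduce; rw [← TensorProduct.smul_tmul']; exact smul c _ px
  induction z with
  | zero => exact zero
  | tmul a b => exact key a b
  | add x y px py => exact add x y px py

variable (hμ : IsKoszulMul k R μ)
include hμ

lemma mu_one_mul : ∀ z, μ ((1 : BAlg k R) ⊗ₜ 1) z = z := by
  intro z
  induction z using tmono_induction k R with
  | mem a ha b hb =>
    obtain ⟨n, han⟩ := mono_mem_Bdeg k R ha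
    rw [hμ 0 n 1 1 a b (one_mem_Bdeg k R) han]
    simp
  | zero => simp
  | add x y px py => rw [map_add, px, py]
  | smul c x px => rw [map_smul, px]

lemma mu_mul_one : ∀ z, μ z ((1 : BAlg k R) ⊗ₜ 1) = z := by
  intro z
  induction z using tmono_induction k R with
  | mem a ha b hb =>
    obtain ⟨m, hbm⟩ := mono_mem_Bdeg k R hb
    rw [hμ m 0 a b 1 1 hbm (one_mem_Bdeg k R)]
    simp
  | zero => simp
  | add x y px py => rw [map_add, LinearMap.add_apply, px, py]
  | smul c x px => rw [map_smul, LinearMap.smul_apply, px]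

lemma mu_assoc : ∀ x y z, μ (μ x y) z = μ x (μ y z) := by
  have key : ∀ a ∈ monoSet k R, ∀ b ∈ monoSet k R, ∀ a' ∈ monoSet k R, ∀ b' ∈ monoSet k R,
      ∀ a'' ∈ monoSet k R, ∀ b'' ∈ monoSet k R,
      μ (μ (a ⊗ₜ b) (a' ⊗ₜ b')) (a'' ⊗ₜ b'') = μ (a ⊗ₜ b) (μ (a' ⊗ₜ b') (a'' ⊗ₜ b'')) := by
    intro a _ b hb a' ha' b' hb' a'' ha'' b'' _
    obtain ⟨m, hbm⟩ := mono_mem_Bdeg k R hb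
    obtain ⟨n, han⟩ := mono_mem_Bdeg k R ha'
    obtain ⟨m', hbm'⟩ := mono_mem_Bdeg k R hb'
    obtain ⟨p, hap⟩ := mono_mem_Bdeg k R ha''
    rw [hμ m n a b a' b' hbm han, hμ m' p a' b' a'' b'' hbm' hap,
      map_smul, LinearMap.smul_apply, map_smul,
      hμ (m + m') p (a * a') (b * b') a'' b'' (Bdeg_mul k R hbm hbm') hap,
      hμ m (n + p) a b (a' * a'') (b' * b'') hbm (Bdeg_mul k R han hap),
      smul_smul, smul_smul, ← pow_add, ← pow_add, mul_assoc, mul_assoc,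
      show m * n + (m + m') * p = m' * p + m * (n + p) from by ring]
  refine fun x y z => ?_
  induction z using tmono_induction k R with
  | mem a'' ha'' b'' hb'' =>
    induction y using tmono_induction k R with
    | mem a' ha' b' hb' =>
      induction x using tmono_induction k R with
      | mem a ha b hb => exact key a ha b hb a' ha' b' hb' a'' ha'' b'' hb''
      | zero => simp
      | add u v pu pv => simp only [map_add, LinearMap.add_apply, pu, pv]
      | smul c u pu => simp only [map_smul, LinearMap.smul_apply, pu]
    | zero => simp
    | add u v pu pv => simp only [map_add, LinearMap.add_apply, pu, pv]
    | smul c u pu => simp only [map_smul, LinearMap.smul_apply, pu]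
  | zero => simp
  | add u v pu pv => simp only [map_add, pu, pv]
  | smul c u pu => simp only [map_smul, pu]

end Aux


section Tw

variable (μ : BAlg k R ⊗[k] BAlg k R →ₗ[k] BAlg k R ⊗[k] BAlg k R →ₗ[k] BAlg k R ⊗[k] BAlg k R)

/-- Type synonym for `B ⊗ B` carrying the Koszul-signed multiplication `μ`. -/
@[nolint unusedArguments]
def Tw (_hμ : IsKoszulMul k R μ) : Type _ := BAlg k R ⊗[k] BAlg k R

variable {hμ : IsKoszulMul k R μ}

noncomputable instance : AddCommGroup (Tw k R μ hμ) :=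
  inferInstanceAs (AddCommGroup (BAlg k R ⊗[k] BAlg k R))

noncomputable instance : Module k (Tw k R μ hμ) :=
  inferInstanceAs (Module k (BAlg k R ⊗[k] BAlg k R))

variable (hμ) in
/-- Reinterpret an element of `B ⊗ B` in the twisted algebra. -/
noncomputable def twMk : (BAlg k R ⊗[k] BAlg k R) ≃ₗ[k] Tw k R μ hμ := LinearEquiv.refl _ _

noncomputable instance : Ring (Tw k R μ hμ) :=
  { (inferInstance : AddCommGroup (Tw k R μ hμ)) with
    mul := fun x y => twMk k R μ hμ (μ ((twMk k R μ hμ).symm x) ((twMk k R μ hμ).symm y))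
    one := twMk k R μ hμ ((1 : BAlg k R) ⊗ₜ 1)
    mul_assoc := fun x y z => mu_assoc k R μ hμ _ _ _
    one_mul := fun x => mu_one_mul k R μ hμ _
    mul_one := fun x => mu_mul_one k R μ hμ _
    left_distrib := fun a b c => map_add (μ ((twMk k R μ hμ).symm a)) _ _
    right_distrib := fun a b c => by
      show μ ((twMk k R μ hμ).symm a + (twMk k R μ hμ).symm b) _ = _
      rw [map_add, LinearMap.add_apply]; rfl
    zero_mul := fun a => by
      show μ 0 _ = 0
      rw [map_zero, LinearMap.zero_apply]
    mul_zero := fun a => map_zero (μ ((twMk k R μ hμ).symm a)) }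

noncomputable instance : Algebra k (Tw k R μ hμ) :=
  Algebra.ofModule
    (fun c x y => by
      show μ (c • (twMk k R μ hμ).symm x) ((twMk k R μ hμ).symm y)
        = c • μ ((twMk k R μ hμ).symm x) ((twMk k R μ hμ).symm y)
      rw [map_smul, LinearMap.smul_apply])
    (fun c x y => by
      show μ ((twMk k R μ hμ).symm x) (c • (twMk k R μ hμ).symm y)
        = c • μ ((twMk k R μ hμ).symm x) ((twMk k R μ hμ).symm y)
      rw [map_smul])

variable (hμ)

/-- The coproduct on the free algebra. -/
noncomputable def Dfree : FreeAlgebra k (X ⊕ X) →ₐ[k] Tw k R μ hμ :=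
  FreeAlgebra.lift k (Sum.elim
    (fun x => twMk k R μ hμ (gg k R x ⊗ₜ gg k R x))
    (fun x => twMk k R μ hμ (ee k R x ⊗ₜ gg k R x + 1 ⊗ₜ ee k R x)))

lemma gg_rel (x y : X) : gg k R y * gg k R (R.act x y) = gg k R x * gg k R y := by
  unfold gg
  rw [← map_mul, ← map_mul]
  exact RingQuot.mkAlgHom_rel k (Brel.comm x y)

lemma ge_rel (x y : X) : gg k R y * ee k R (R.act x y) = ee k R x * gg k R y := by
  unfold gg ee
  rw [← map_mul, ← map_mul]
  exact RingQuot.mkAlgHom_rel k (Brel.eact x y)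

lemma Dfree_rel : ∀ ⦃a b⦄, Brel k R a b → Dfree k R μ hμ a = Dfree k R μ hμ b := by
  intro a b h
  have mul_def : ∀ u v : BAlg k R ⊗[k] BAlg k R,
      twMk k R μ hμ u * twMk k R μ hμ v = twMk k R μ hμ (μ u v) := fun _ _ => rfl
  induction h with
  | comm x y =>
    simp only [map_mul, Dfree, FreeAlgebra.lift_ι_apply, Sum.elim_inl]
    rw [mul_def, mul_def,
      hμ 0 0 _ _ _ _ (gg_mem_Bdeg k R y) (gg_mem_Bdeg k R (R.act x y)),
      hμ 0 0 _ _ _ _ (gg_mem_Bdeg k R x) (gg_mem_Bdeg k R y),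
      gg_rel]
  | eact x y =>
    simp only [map_mul, Dfree, FreeAlgebra.lift_ι_apply, Sum.elim_inl, Sum.elim_inr]
    rw [map_add (twMk k R μ hμ), map_add (twMk k R μ hμ)]
    rw [mul_add, add_mul, mul_def, mul_def, mul_def, mul_def,
      hμ 0 1 _ _ _ _ (gg_mem_Bdeg k R y) (ee_mem_Bdeg k R (R.act x y)),
      hμ 0 0 _ _ _ _ (gg_mem_Bdeg k R y) (one_mem_Bdeg k R),
      hμ 0 0 _ _ _ _ (gg_mem_Bdeg k R x) (gg_mem_Bdeg k R y),
      hμ 1 0 _ _ _ _ (ee_mem_Bdeg k R x) (gg_mem_Bdeg k R y)]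
    simp only [Nat.zero_mul, Nat.mul_zero, Nat.mul_one, pow_zero, pow_one, one_smul,
      mul_one, one_mul]
    rw [ge_rel, gg_rel]

/-- The coproduct as an algebra hom to the twisted algebra. -/
noncomputable def Dalg : BAlg k R →ₐ[k] Tw k R μ hμ :=
  RingQuot.liftAlgHom k ⟨Dfree k R μ hμ, Dfree_rel k R μ hμ⟩

end Tw


/-- The comultiplication `Δ` with `Δ(x) = x ⊗ x`, `Δ(e_x) = e_x ⊗ x + 1 ⊗ e_x`,
multiplicative for the Koszul-signed product on `B ⊗ B`, is well defined on the
quotient `B`: i.e. such a (linear, unital, multiplicative) map on `B` exists. -/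
theorem BAlg_coprod_exists (k : Type*) [CommRing k] {X : Type*} (R : RackS X)
    (μ : BAlg k R ⊗[k] BAlg k R →ₗ[k] BAlg k R ⊗[k] BAlg k R →ₗ[k] BAlg k R ⊗[k] BAlg k R)
    (hμ : IsKoszulMul k R μ) :
    ∃ Δ : BAlg k R →ₗ[k] BAlg k R ⊗[k] BAlg k R, IsBCoprod k R μ Δ := by
  refine ⟨((twMk k R μ hμ).symm.toLinearMap).comp (Dalg k R μ hμ).toLinearMap,
    ?_, ?_, ?_, ?_⟩
  · show (twMk k R μ hμ).symm (Dalg k R μ hμ 1) = _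
    rw [map_one]
    rfl
  · intro a b
    show (twMk k R μ hμ).symm (Dalg k R μ hμ (a * b)) = _
    rw [map_mul]
    rfl
  · intro x
    show (twMk k R μ hμ).symm (Dalg k R μ hμ (gg k R x)) = _
    rw [gg, Dalg, RingQuot.liftAlgHom_mkAlgHom_apply, Dfree, FreeAlgebra.lift_ι_apply]
    rfl
  · intro x
    show (twMk k R μ hμ).symm (Dalg k R μ hμ (ee k R x)) = _
    rw [ee, Dalg, RingQuot.liftAlgHom_mkAlgHom_apply, Dfree, FreeAlgebra.lift_ι_apply]
    rfl
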